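/- Let n be odd with n ≥ 5, let H be any simple graph on (n+1)/2 vertices, and let G = (H ∨ K̄_{(n−1)/2}) − (v₁, u₁) be the join with one cross edge deleted, where v₁ is on the H-side and u₁ is on the K̄-side. Then G is not 2-vertex-fault hamiltonian: deleting two vertices of the H-side from G leaves a non-hamiltonian graph. -/

import Mathlib

/-!
After deleting two `H`-side vertices, `(n - 3) / 2` vertices of the `H`-side remain next to the
`(n - 1) / 2` pairwise non-adjacent vertices of the `K̄`-side. Sending each vertex to its successor
on a hamiltonian cycle is injective and moves every vertex of an independent set out of it, so an
independent set holds at most half the vertices of a hamiltonian graph; here it holds more.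
-/

open SimpleGraph Finset

set_option linter.unusedVariables false

/-- The degree of a vertex: the number of its neighbors. -/
noncomputable def deg {α : Type*} (G : SimpleGraph α) (v : α) : ℕ :=
  (G.neighborSet v).ncard

/-- The join of two (disjoint) graphs: both graphs together with all cross edges. -/
def gJoin {α β : Type*} (G : SimpleGraph α) (H : SimpleGraph β) : SimpleGraph (α ⊕ β) where
  Adj u v := match u, v with
    | Sum.inl a, Sum.inl b => G.Adj a b
    | Sum.inr a, Sum.inr b => H.Adj a b
    | _, _ => True
  symm := ⟨by
    rintro (a | a) (b | b) h
    · exact G.adj_symm h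
    · trivial
    · trivial
    · exact H.adj_symm h⟩
  loopless := ⟨by
    rintro (a | a) h
    · exact G.loopless.irrefl a h
    · exact H.loopless.irrefl a h⟩

/-- `kK2 k` : the disjoint union of `k` copies of `K₂`. -/
def kK2 (k : ℕ) : SimpleGraph (Fin k × Fin 2) where
  Adj p q := p.1 = q.1 ∧ p.2 ≠ q.2
  symm := ⟨fun p q h => ⟨h.1.symm, h.2.symm⟩⟩
  loopless := ⟨fun p h => h.2 rfl⟩

/-- `G − F`: the subgraph of `G` induced on the complement of the vertex set `F`. -/
def delVerts {W : Type*} [Fintype W] [DecidableEq W] (G : SimpleGraph W) (F : Finset W) :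
    SimpleGraph ((Fᶜ : Finset W) : Set W) :=
  G.induce ((Fᶜ : Finset W) : Set W)

namespace SimpleGraph

variable {V : Type*} [DecidableEq V] {G : SimpleGraph V}

lemma Walk.IsHamiltonianCycle.exists_injective_adj {a : V} {p : G.Walk a a}
    (hp : p.IsHamiltonianCycle) : ∃ σ : V → V, σ.Injective ∧ ∀ v, G.Adj v (σ v) := by
  have hidx : ∀ v, ∃ i < p.length, p.getVert i = v := by
    intro v
    obtain ⟨i, hi, hil⟩ := Walk.mem_support_iff_exists_getVert.mp (hp.mem_support v)
    rcases hil.lt_or_eq with hlt | rfl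
    · exact ⟨i, hlt, hi⟩
    · exact ⟨0, by have := hp.isCycle.three_le_length; omega,
        by rw [Walk.getVert_zero, ← hi, Walk.getVert_length]⟩
  choose idx hlt hget using hidx
  refine ⟨fun v => p.getVert (idx v + 1), fun v w h => ?_, fun v => ?_⟩
  · have hsucc :=
      hp.isCycle.getVert_injOn ⟨Nat.le_add_left 1 _, hlt v⟩ ⟨Nat.le_add_left 1 _, hlt w⟩ h
    rw [← hget v, ← hget w, Nat.succ_injective hsucc]
  · simpa [hget] using p.adj_getVert_succ (hlt v)

lemma two_mul_card_le_of_injective_adj [Fintype V] {σ : V → V} (hσ : σ.Injective)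
    (hadj : ∀ v, G.Adj v (σ v)) {s : Finset V} (hs : G.IsIndepSet s) :
    2 * #s ≤ Fintype.card V := by
  have himage : s.image σ ⊆ sᶜ := by
    simp only [subset_iff, mem_image, mem_compl]
    rintro _ ⟨v, hv, rfl⟩ hσv
    exact hs hv hσv (hadj v).ne (hadj v)
  have hle : #s ≤ #sᶜ := (card_image_of_injective s hσ).symm.trans_le (card_le_card himage)
  have hsum := card_add_card_compl s
  omega

-- `Fintype.card V ≠ 1` because Mathlib counts the one-vertex graph as hamiltonian.
lemma IsHamiltonian.two_mul_card_le_of_isIndepSet [Fintype V] (hG : G.IsHamiltonian)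
    (hV : Fintype.card V ≠ 1) {s : Finset V} (hs : G.IsIndepSet s) :
    2 * #s ≤ Fintype.card V := by
  obtain ⟨a, p, hp⟩ := hG hV
  obtain ⟨σ, hσ, hadj⟩ := hp.exists_injective_adj
  exact two_mul_card_le_of_injective_adj hσ hadj hs

end SimpleGraph

lemma not_isHamiltonian_delVerts {W : Type*} [Fintype W] [DecidableEq W] {G : SimpleGraph W}
    {F s : Finset W} (hs : G.IsIndepSet s) (hsF : Disjoint s F) (hW : Fintype.card W ≠ #F + 1)
    (hlt : Fintype.card W < #F + 2 * #s) : ¬(delVerts G F).IsHamiltonian := by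
  intro hG
  have hcard : Fintype.card ((Fᶜ : Finset W) : Set W) = Fintype.card W - #F := by
    simp only [coe_sort_coe, Fintype.card_coe, card_compl]
  have hs' : (delVerts G F).IsIndepSet (s.subtype (· ∈ Fᶜ) : Set _) := by
    intro x hx y hy hxy hadj
    exact hs (mem_subtype.mp hx) (mem_subtype.mp hy) (Subtype.val_injective.ne hxy) hadj
  have hcard_s : #(s.subtype (· ∈ Fᶜ)) = #s := by
    rw [card_subtype, filter_true_of_mem fun x hx => mem_compl.mpr (disjoint_left.mp hsF hx)]
  have hF : #F ≤ Fintype.card W := card_le_univ F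
  have hhalf := hG.two_mul_card_le_of_isIndepSet (by omega) hs'
  omega

lemma not_isHamiltonian_delVerts_inl_pair {α β : Type*} [Fintype α] [Fintype β]
    [DecidableEq α] [DecidableEq β] {G : SimpleGraph (α ⊕ β)}
    (hβ : ∀ u w, ¬G.Adj (.inr u) (.inr w)) {a b : α} (hab : a ≠ b)
    (hcard : Fintype.card α ≤ Fintype.card β + 1) (hβ2 : 2 ≤ Fintype.card β) :
    ¬(delVerts G {.inl a, .inl b}).IsHamiltonian := by
  have hs : G.IsIndepSet (univ.map .inr : Finset (α ⊕ β)) := by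
    simp only [coe_map, coe_univ, Set.image_univ]
    rintro _ ⟨u, rfl⟩ _ ⟨w, rfl⟩ _
    exact hβ u w
  have hF : #({.inl a, .inl b} : Finset (α ⊕ β)) = 2 := card_pair (by simpa using hab)
  have hα : 1 < Fintype.card α := Fintype.one_lt_card_iff.mpr ⟨a, b, hab⟩
  refine not_isHamiltonian_delVerts hs (by simp) ?_ ?_ <;>
    simp only [hF, card_map, card_univ, Fintype.card_sum] <;> omega

/-- For odd `n ≥ 5`, any `H` on `(n+1)/2` vertices and the graph
`G = (H ∨ K̄_{(n−1)/2}) − (v₁, u₁)`, `G` is not 2-vertex-fault hamiltonian: deleting two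
`H`-side vertices leaves a non-hamiltonian graph. -/
theorem statement_13 (n : ℕ) (hodd : Odd n) (hn5 : 5 ≤ n)
    (H : SimpleGraph (Fin ((n + 1) / 2)))
    (v₁ : Fin ((n + 1) / 2)) (u₁ : Fin ((n - 1) / 2))
    (G : SimpleGraph (Fin ((n + 1) / 2) ⊕ Fin ((n - 1) / 2)))
    (hG : G = (gJoin H (⊥ : SimpleGraph (Fin ((n - 1) / 2)))).deleteEdges
      {s(Sum.inl v₁, Sum.inr u₁)}) :
    ¬(∀ F : Finset (Fin ((n + 1) / 2) ⊕ Fin ((n - 1) / 2)), F.card ≤ 2 →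
        (delVerts G F).IsHamiltonian) ∧
    (∀ a b : Fin ((n + 1) / 2), a ≠ b →
      ¬(delVerts G {Sum.inl a, Sum.inl b}).IsHamiltonian) := by
  obtain ⟨m, rfl⟩ := hodd
  have hβ : ∀ u w, ¬G.Adj (.inr u) (.inr w) := fun u w hadj =>
    (hG ▸ hadj |> deleteEdges_le _ : (gJoin H ⊥).Adj (.inr u) (.inr w))
  have hpair : ∀ a b : Fin ((2 * m + 1 + 1) / 2), a ≠ b →
      ¬(delVerts G {Sum.inl a, Sum.inl b}).IsHamiltonian := fun a b hab =>
    not_isHamiltonian_delVerts_inl_pair hβ hab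
      (by simp only [Fintype.card_fin]; omega) (by simp only [Fintype.card_fin]; omega)
  refine ⟨fun hall => ?_, hpair⟩
  have hne : (⟨0, by omega⟩ : Fin ((2 * m + 1 + 1) / 2)) ≠ ⟨1, by omega⟩ := by simp
  exact hpair _ _ hne (hall _ card_le_two)
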